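/- (Faà di Bruno growth estimate for compositions.) Let J be a segment, g : J → ℂ smooth with N_S(g) < ∞, t ∈ J, and ψ(w) = Σ_{n≥0} c_n w^n a complex power series with radius of convergence ρ > 0; set φ_t(ζ) = ψ(ζ − g(t)). Let J_t ⊆ J be a segment containing t with g(J_t) ⊆ D(g(t), ρ). Then for every s ∈ J_t, every p ≥ 1, and every r with |g(s) − g(t)| < r < ρ: |D^p(φ_t ∘ g)(s)| ≤ ψ*(r) · p! · S^p · (1 + N_S(g)/(r − |g(s) − g(t)|))^p, where ψ*(r) = Σ_{n≥0} |c_n| r^n. -/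

import Mathlib

open scoped Nat BigOperators ENNReal
open Filter

/-- Majorant sequence for derivatives of powers. -/
noncomputable def Bmaj (m N : ℝ) : ℕ → ℕ → ℝ
  | 0, p => if p = 0 then 1 else 0
  | n + 1, p => m * Bmaj m N n p + N * ∑ q ∈ Finset.range p, Bmaj m N n q

lemma Bmaj_nonneg {m N : ℝ} (hm : 0 ≤ m) (hN : 0 ≤ N) : ∀ n p, 0 ≤ Bmaj m N n p := by
  intro n
  induction n with
  | zero => intro p; simp only [Bmaj]; split <;> norm_num
  | succ n IH =>
    intro p
    exact add_nonneg (mul_nonneg hm (IH p))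
      (mul_nonneg hN (Finset.sum_nonneg fun q _ => IH q))

lemma Bmaj_le {m m' N r : ℝ} (hm0 : 0 ≤ m) (hmm' : m ≤ m') (hm'r : m' < r) (hN : 0 ≤ N) :
    ∀ n p : ℕ, Bmaj m N n p ≤ r ^ n * (1 + N / (r - m')) ^ p := by
  have hm'0 : 0 ≤ m' := hm0.trans hmm'
  have hr0 : 0 < r := lt_of_le_of_lt hm'0 hm'r
  have hD : 0 < r - m' := by linarith
  set X := 1 + N / (r - m') with hX
  have hX1 : 1 ≤ X := by
    have : 0 ≤ N / (r - m') := div_nonneg hN hD.le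
    simp only [hX]; linarith
  intro n
  induction n with
  | zero =>
    intro p
    simp only [Bmaj, pow_zero, one_mul]
    split
    · exact one_le_pow₀ hX1
    · positivity
  | succ n IH =>
    intro p
    have hBn : ∀ q, 0 ≤ Bmaj m N n q := Bmaj_nonneg hm0 hN n
    have hNval : N = (r - m') * (X - 1) := by
      rw [hX, add_sub_cancel_left, mul_div_assoc']; exact (mul_div_cancel_left₀ N hD.ne').symm
    have hgeom : N * ∑ q ∈ Finset.range p, X ^ q = (r - m') * (X ^ p - 1) := by
      rw [hNval]
      have h1 : (∑ q ∈ Finset.range p, X ^ q) * (X - 1) = X ^ p - 1 := geom_sum_mul X p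
      calc (r - m') * (X - 1) * ∑ q ∈ Finset.range p, X ^ q
          = (r - m') * ((∑ q ∈ Finset.range p, X ^ q) * (X - 1)) := by ring
        _ = (r - m') * (X ^ p - 1) := by rw [h1]
    calc Bmaj m N (n + 1) p
        = m * Bmaj m N n p + N * ∑ q ∈ Finset.range p, Bmaj m N n q := rfl
      _ ≤ m' * (r ^ n * X ^ p) + N * ∑ q ∈ Finset.range p, (r ^ n * X ^ q) := by
          refine add_le_add (mul_le_mul hmm' (IH p) (hBn p) hm'0) ?_
          exact mul_le_mul_of_nonneg_left
            (Finset.sum_le_sum fun q _ => IH q) hN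
      _ = r ^ n * (m' * X ^ p + N * ∑ q ∈ Finset.range p, X ^ q) := by
          rw [← Finset.mul_sum]; ring
      _ = r ^ n * (m' * X ^ p + (r - m') * (X ^ p - 1)) := by rw [hgeom]
      _ ≤ r ^ n * (r * X ^ p) := by
          refine mul_le_mul_of_nonneg_left ?_ (pow_nonneg hr0.le n)
          nlinarith
      _ = r ^ (n + 1) * X ^ p := by ring

lemma norm_iteratedDerivWithin_pow_le {K : Set ℝ} (hU : UniqueDiffOn ℝ K)
    {h : ℝ → ℂ} (hh : ContDiffOn ℝ (⊤ : ℕ∞) h K)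
    {S N : ℝ} (hS : 0 < S) (hN : 0 ≤ N)
    (hD : ∀ q, 1 ≤ q → ∀ x ∈ K, ‖iteratedDerivWithin q h K x‖ ≤ N * (q ! * S ^ q)) :
    ∀ n p, ∀ x ∈ K, ‖iteratedDerivWithin p (fun y => h y ^ n) K x‖ ≤
      p ! * S ^ p * Bmaj (‖h x‖) N n p := by
  intro n
  induction n with
  | zero =>
    intro p x hx
    rcases Nat.eq_zero_or_pos p with hp | hp
    · subst hp
      simp [Bmaj]
    · have h0 : iteratedDerivWithin p (fun y => h y ^ 0) K x = 0 := by
        simp only [pow_zero]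
        rw [iteratedDerivWithin_eq_iteratedFDerivWithin,
          iteratedFDerivWithin_const_of_ne hp.ne' _ _]
        rfl
      rw [h0, norm_zero]
      have : Bmaj (‖h x‖) N 0 p = 0 := by
        simp [Bmaj, hp.ne']
      rw [this, mul_zero]
  | succ n IH =>
    intro p x hx
    have hm0 : 0 ≤ ‖h x‖ := norm_nonneg _
    set m := ‖h x‖ with hm
    have hBn : ∀ q, 0 ≤ Bmaj m N n q := Bmaj_nonneg hm0 hN n
    have hpow : ContDiffOn ℝ (⊤ : ℕ∞) (fun y => h y ^ n) K := hh.pow n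
    have hmul : ‖iteratedDerivWithin p (fun y => h y ^ (n + 1)) K x‖ ≤
        ∑ i ∈ Finset.range (p + 1), (p.choose i : ℝ) *
          ‖iteratedDerivWithin i h K x‖ *
          ‖iteratedDerivWithin (p - i) (fun y => h y ^ n) K x‖ := by
      simp only [pow_succ']
      rw [← norm_iteratedFDerivWithin_eq_norm_iteratedDerivWithin]
      refine (norm_iteratedFDerivWithin_mul_le hh hpow hU hx (by exact_mod_cast le_top)).trans ?_
      simp only [norm_iteratedFDerivWithin_eq_norm_iteratedDerivWithin]
      exact le_rfl
    refine hmul.trans ?_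
    rw [Finset.sum_range_succ']
    have hfirst : (p.choose 0 : ℝ) * ‖iteratedDerivWithin 0 h K x‖ *
        ‖iteratedDerivWithin (p - 0) (fun y => h y ^ n) K x‖ ≤
        m * (p ! * S ^ p * Bmaj m N n p) := by
      simp only [Nat.choose_zero_right, Nat.cast_one, one_mul, Nat.sub_zero,
        iteratedDerivWithin_zero]
      exact mul_le_mul_of_nonneg_left (IH p x hx) hm0
    have hrest : ∀ i ∈ Finset.range p,
        (p.choose (i + 1) : ℝ) * ‖iteratedDerivWithin (i + 1) h K x‖ *
          ‖iteratedDerivWithin (p - (i + 1)) (fun y => h y ^ n) K x‖ ≤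
        N * (p ! * S ^ p) * Bmaj m N n (p - 1 - i) := by
      intro i hi
      have hip : i + 1 ≤ p := Finset.mem_range.1 hi
      have h1 : ‖iteratedDerivWithin (i + 1) h K x‖ ≤ N * ((i + 1)! * S ^ (i + 1)) :=
        hD (i + 1) (Nat.succ_le_succ (Nat.zero_le i)) x hx
      have h2 : ‖iteratedDerivWithin (p - (i + 1)) (fun y => h y ^ n) K x‖ ≤
          (p - (i + 1))! * S ^ (p - (i + 1)) * Bmaj m N n (p - (i + 1)) := IH _ x hx
      have hidx : p - 1 - i = p - (i + 1) := by omega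
      rw [hidx]
      have hfact : (p.choose (i + 1) : ℝ) * ((i + 1)! : ℝ) * ((p - (i + 1))! : ℝ)
          = (p ! : ℝ) := by
        exact_mod_cast congrArg (Nat.cast (R := ℝ))
          (Nat.choose_mul_factorial_mul_factorial hip)
      have hpowS : S ^ (i + 1) * S ^ (p - (i + 1)) = S ^ p := by
        rw [← pow_add]; congr 1; omega
      calc (p.choose (i + 1) : ℝ) * ‖iteratedDerivWithin (i + 1) h K x‖ *
            ‖iteratedDerivWithin (p - (i + 1)) (fun y => h y ^ n) K x‖
          ≤ (p.choose (i + 1) : ℝ) * (N * ((i + 1)! * S ^ (i + 1))) *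
            ((p - (i + 1))! * S ^ (p - (i + 1)) * Bmaj m N n (p - (i + 1))) := by
            refine mul_le_mul (mul_le_mul_of_nonneg_left h1 (by positivity)) h2
              (norm_nonneg _) (by positivity)
        _ = ((p.choose (i + 1) : ℝ) * ((i + 1)! : ℝ) * ((p - (i + 1))! : ℝ)) *
              (S ^ (i + 1) * S ^ (p - (i + 1))) * N * Bmaj m N n (p - (i + 1)) := by
            ring
        _ = N * (p ! * S ^ p) * Bmaj m N n (p - (i + 1)) := by
            rw [hfact, hpowS]; ring
    calc (∑ i ∈ Finset.range p, (p.choose (i + 1) : ℝ) *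
            ‖iteratedDerivWithin (i + 1) h K x‖ *
            ‖iteratedDerivWithin (p - (i + 1)) (fun y => h y ^ n) K x‖) +
          (p.choose 0 : ℝ) * ‖iteratedDerivWithin 0 h K x‖ *
            ‖iteratedDerivWithin (p - 0) (fun y => h y ^ n) K x‖
        ≤ (∑ i ∈ Finset.range p, N * (p ! * S ^ p) * Bmaj m N n (p - 1 - i)) +
          m * (p ! * S ^ p * Bmaj m N n p) :=
          add_le_add (Finset.sum_le_sum hrest) hfirst
      _ = p ! * S ^ p * (m * Bmaj m N n p +
            N * ∑ q ∈ Finset.range p, Bmaj m N n q) := by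
          rw [← Finset.mul_sum, Finset.sum_range_reflect (fun q => Bmaj m N n q) p]
          ring
      _ = p ! * S ^ p * Bmaj m N (n + 1) p := rfl

lemma hasDerivWithinAt_tsum_of_bound {K : Set ℝ} (hK : Convex ℝ K)
    {f : ℕ → ℝ → ℂ} {f' : ℕ → ℝ → ℂ} {u : ℕ → ℝ} (hu : Summable u)
    (hf : ∀ n, ∀ x ∈ K, HasDerivWithinAt (f n) (f' n x) K x)
    (hf' : ∀ n, ∀ x ∈ K, ‖f' n x‖ ≤ u n)
    (hsum : ∀ x ∈ K, Summable fun n => f n x)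
    {x : ℝ} (hx : x ∈ K) :
    HasDerivWithinAt (fun y => ∑' n, f n y) (∑' n, f' n x) K x := by
  have hu0 : ∀ n, 0 ≤ u n := fun n => (norm_nonneg _).trans (hf' n x hx)
  have hf'x : Summable fun n => f' n x :=
    Summable.of_norm_bounded hu (fun n => hf' n x hx)
  rw [hasDerivWithinAt_iff_isLittleO, Asymptotics.isLittleO_iff]
  intro ε hε
  -- choose M such that the tail of u is small
  have htail : Filter.Tendsto (fun M => ∑' n, u (n + M)) atTop (nhds 0) :=
    tendsto_sum_nat_add u
  obtain ⟨M, hM⟩ : ∃ M, ∑' n, u (n + M) < ε / 3 := by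
    have := (htail.eventually (gt_mem_nhds (by linarith : (0:ℝ) < ε / 3))).exists
    exact this
  have huM : Summable fun n => u (n + M) := (summable_nat_add_iff M).2 hu
  have huMnonneg : 0 ≤ ∑' n, u (n + M) := tsum_nonneg fun n => hu0 _
  -- pieces
  set P : ℝ → ℂ := fun y => ∑ n ∈ Finset.range M, f n y with hP
  set T : ℝ → ℂ := fun y => ∑' n, f (n + M) y with hT
  set LP : ℂ := ∑ n ∈ Finset.range M, f' n x with hLP
  set LT : ℂ := ∑' n, f' (n + M) x with hLT
  have hsplitF : ∀ y ∈ K, (∑' n, f n y) = P y + T y := fun y hy =>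
    (Summable.sum_add_tsum_nat_add M (hsum y hy)).symm
  have hsplitL : (∑' n, f' n x) = LP + LT := (Summable.sum_add_tsum_nat_add M hf'x).symm
  -- tail bounds
  have hLTnorm : ‖LT‖ ≤ ε / 3 := by
    have h1 : ‖LT‖ ≤ ∑' n, u (n + M) := by
      refine (norm_tsum_le_tsum_norm ?_).trans (Summable.tsum_le_tsum (fun n => hf' _ x hx) ?_ huM)
      · exact Summable.of_nonneg_of_le (fun n => norm_nonneg _) (fun n => hf' _ x hx) huM
      · exact Summable.of_nonneg_of_le (fun n => norm_nonneg _) (fun n => hf' _ x hx) huM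
    linarith
  have hTdiff : ∀ y ∈ K, ‖T y - T x‖ ≤ (ε / 3) * ‖y - x‖ := by
    intro y hy
    have hsy : Summable fun n => f (n + M) y := (summable_nat_add_iff M).2 (hsum y hy)
    have hsx : Summable fun n => f (n + M) x := (summable_nat_add_iff M).2 (hsum x hx)
    have hterm : ∀ n, ‖f (n + M) y - f (n + M) x‖ ≤ u (n + M) * ‖y - x‖ := fun n =>
      hK.norm_image_sub_le_of_norm_hasDerivWithin_le
        (fun z hz => hf (n + M) z hz) (fun z hz => hf' (n + M) z hz) hx hy
    have hsub : T y - T x = ∑' n, (f (n + M) y - f (n + M) x) := (Summable.tsum_sub hsy hsx).symm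
    rw [hsub]
    have hsn : Summable fun n => ‖f (n + M) y - f (n + M) x‖ :=
      Summable.of_nonneg_of_le (fun n => norm_nonneg _) hterm (huM.mul_right _)
    refine (norm_tsum_le_tsum_norm hsn).trans ?_
    refine (Summable.tsum_le_tsum hterm hsn (huM.mul_right _)).trans ?_
    rw [tsum_mul_right]
    exact mul_le_mul_of_nonneg_right hM.le (norm_nonneg _)
  -- finite part
  have hPderiv : HasDerivWithinAt P LP K x :=
    HasDerivWithinAt.fun_sum fun n _ => hf n x hx
  have hPlittle := (hasDerivWithinAt_iff_isLittleO.1 hPderiv)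
  have hPev := (Asymptotics.isLittleO_iff.1 hPlittle) (by linarith : (0:ℝ) < ε / 3)
  filter_upwards [hPev, self_mem_nhdsWithin] with y hPy hyK
  have hdecomp : (∑' n, f n y) - (∑' n, f n x) - (y - x) • (∑' n, f' n x)
      = (P y - P x - (y - x) • LP) + ((T y - T x) - (y - x) • LT) := by
    rw [hsplitF y hyK, hsplitF x hx, hsplitL, smul_add]
    ring
  rw [hdecomp]
  have h2 : ‖(T y - T x) - (y - x) • LT‖ ≤ (ε / 3) * ‖y - x‖ + (ε / 3) * ‖y - x‖ := by
    refine (norm_sub_le _ _).trans (add_le_add (hTdiff y hyK) ?_)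
    rw [norm_smul]
    calc ‖y - x‖ * ‖LT‖ ≤ ‖y - x‖ * (ε / 3) :=
          mul_le_mul_of_nonneg_left hLTnorm (norm_nonneg _)
      _ = (ε / 3) * ‖y - x‖ := mul_comm _ _
  calc ‖(P y - P x - (y - x) • LP) + ((T y - T x) - (y - x) • LT)‖
      ≤ ‖P y - P x - (y - x) • LP‖ + ‖(T y - T x) - (y - x) • LT‖ := norm_add_le _ _
    _ ≤ (ε / 3) * ‖y - x‖ + ((ε / 3) * ‖y - x‖ + (ε / 3) * ‖y - x‖) := add_le_add hPy h2
    _ = ε * ‖y - x‖ := by ring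

lemma iteratedDerivWithin_tsum_of_bound {K : Set ℝ} (hK : Convex ℝ K)
    (hU : UniqueDiffOn ℝ K) :
    ∀ (p : ℕ) (f : ℕ → ℝ → ℂ) (u : ℕ → ℕ → ℝ),
      (∀ n, ContDiffOn ℝ (⊤ : ℕ∞) (f n) K) → (∀ q, Summable (u q)) →
      (∀ n q, ∀ x ∈ K, ‖iteratedDerivWithin q (f n) K x‖ ≤ u q n) →
      ∀ x ∈ K, iteratedDerivWithin p (fun y => ∑' n, f n y) K x
        = ∑' n, iteratedDerivWithin p (f n) K x := by
  intro p
  induction p with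
  | zero => intro f u hf hu hb x hx; simp
  | succ p IH =>
    intro f u hf hu hb x hx
    have hone : (1 : WithTop ℕ∞) ≤ ((⊤ : ℕ∞) : WithTop ℕ∞) := by
      exact_mod_cast le_top
    have hderiv : ∀ z ∈ K, HasDerivWithinAt (fun y => ∑' n, f n y)
        (∑' n, derivWithin (f n) K z) K z := by
      intro z hz
      refine hasDerivWithinAt_tsum_of_bound hK (hu 1)
        (fun n w hw => ((hf n).differentiableOn (by simp) w hw).hasDerivWithinAt)
        (fun n w hw => ?_) (fun w hw => ?_) hz
      · have := hb n 1 w hw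
        rwa [iteratedDerivWithin_one] at this
      · refine Summable.of_norm_bounded (hu 0) fun n => ?_
        simpa using hb n 0 w hw
    have heq : Set.EqOn (derivWithin (fun y => ∑' n, f n y) K)
        (fun z => ∑' n, derivWithin (f n) K z) K := fun z hz =>
      (hderiv z hz).derivWithin (hU z hz)
    rw [iteratedDerivWithin_succ',
      iteratedDerivWithin_congr heq hx,
      IH (fun n => derivWithin (f n) K) (fun q => u (q + 1))
        (fun n => (hf n).derivWithin hU (by exact_mod_cast le_top))
        (fun q => hu (q + 1))
        (fun n q z hz => by
          rw [← iteratedDerivWithin_succ']; exact hb n (q + 1) z hz) x hx]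
    exact tsum_congr fun n => by rw [← iteratedDerivWithin_succ']

/-- The analytic norm `N_S(g) = sup_{p} ‖D^p g‖_J / (p! S^p)`, valued in `ℝ≥0∞`,
with `‖·‖_J` the sup norm over `J` and derivatives taken within `J`. -/
noncomputable def anorm (J : Set ℝ) (S : ℝ) (g : ℝ → ℂ) : ℝ≥0∞ :=
  ⨆ p : ℕ, (⨆ t ∈ J, (‖iteratedDerivWithin p g J t‖₊ : ℝ≥0∞)) /
    ENNReal.ofReal (p ! * S ^ p)

theorem stmt18 (a b : ℝ) (hab : a < b) (J : Set ℝ) (hJ : J = Set.Icc a b)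
    (S : ℝ) (hS : 0 < S) (g : ℝ → ℂ) (hg : ContDiffOn ℝ (⊤ : ℕ∞) g J)
    (hfin : anorm J S g ≠ ⊤)
    (c : ℕ → ℂ) (ρ : ℝ) (hρ : 0 < ρ)
    (hconv : ∀ r : ℝ, 0 ≤ r → r < ρ → Summable fun n : ℕ => ‖c n‖ * r ^ n)
    (t : ℝ) (ht : t ∈ J)
    (Jt : Set ℝ) (hJtsub : Jt ⊆ J) (htJt : t ∈ Jt)
    (hJtseg : ∃ a' b' : ℝ, a' ≤ b' ∧ Jt = Set.Icc a' b')
    (hgJt : ∀ s ∈ Jt, ‖g s - g t‖ < ρ)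
    (s : ℝ) (hs : s ∈ Jt) (p : ℕ) (hp : 1 ≤ p)
    (r : ℝ) (hr1 : ‖g s - g t‖ < r) (hr2 : r < ρ) :
    (‖iteratedDerivWithin p (fun x => ∑' n : ℕ, c n * (g x - g t) ^ n) J s‖₊ : ℝ≥0∞) ≤
      ENNReal.ofReal (∑' n : ℕ, ‖c n‖ * r ^ n) * (p ! : ℝ≥0∞) *
        (ENNReal.ofReal S) ^ p *
        (1 + anorm J S g / ENNReal.ofReal (r - ‖g s - g t‖)) ^ p := by
  have hsJ : s ∈ J := hJtsub hs
  set m := ‖g s - g t‖ with hmdef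
  have hm0 : 0 ≤ m := norm_nonneg _
  have hmr : m < r := hr1
  have hrm : 0 < r - m := by linarith
  set N := (anorm J S g).toReal with hNdef
  have hN0 : 0 ≤ N := ENNReal.toReal_nonneg
  have hUJ : UniqueDiffOn ℝ J := by rw [hJ]; exact uniqueDiffOn_Icc hab
  have hg' : ContDiffOn ℝ (⊤ : ℕ∞) g J := hg.of_le (by simp)
  -- pointwise derivative bounds from the analytic norm
  have hNg : ∀ q : ℕ, ∀ x ∈ J, ‖iteratedDerivWithin q g J x‖ ≤ N * (q ! * S ^ q) := by
    intro q x hx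
    have hb0 : ENNReal.ofReal (q ! * S ^ q) ≠ 0 := by
      refine (ENNReal.ofReal_pos.mpr ?_).ne'
      positivity
    have h1 : (⨆ t ∈ J, (‖iteratedDerivWithin q g J t‖₊ : ℝ≥0∞)) /
        ENNReal.ofReal (q ! * S ^ q) ≤ anorm J S g :=
      le_iSup (fun p : ℕ => (⨆ t ∈ J, (‖iteratedDerivWithin p g J t‖₊ : ℝ≥0∞)) /
        ENNReal.ofReal (p ! * S ^ p)) q
    have h2 : (‖iteratedDerivWithin q g J x‖₊ : ℝ≥0∞) ≤
        ⨆ t ∈ J, (‖iteratedDerivWithin q g J t‖₊ : ℝ≥0∞) :=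
      le_biSup (fun t => (‖iteratedDerivWithin q g J t‖₊ : ℝ≥0∞)) hx
    have h3 : (‖iteratedDerivWithin q g J x‖₊ : ℝ≥0∞) ≤
        anorm J S g * ENNReal.ofReal (q ! * S ^ q) :=
      h2.trans ((ENNReal.div_le_iff hb0 ENNReal.ofReal_ne_top).1 h1)
    have h4 : anorm J S g * ENNReal.ofReal (q ! * S ^ q) ≠ ⊤ :=
      ENNReal.mul_ne_top hfin ENNReal.ofReal_ne_top
    have h5 := ENNReal.toReal_mono h4 h3
    rwa [ENNReal.coe_toReal, coe_nnnorm, ENNReal.toReal_mul,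
      ENNReal.toReal_ofReal (by positivity)] at h5
  -- a radius between m and r, and a neighborhood where ‖g x - g t‖ ≤ r''
  set r'' := (m + r) / 2 with hr''def
  have hmr'' : m < r'' := by rw [hr''def]; linarith
  have hr''r : r'' < r := by rw [hr''def]; linarith
  have hδ : 0 < r'' - m := by linarith
  have hcont : ContinuousWithinAt g J s := hg'.continuousOn.continuousWithinAt hsJ
  obtain ⟨ε, hε, hKball⟩ : ∃ ε > 0, ∀ y ∈ J, |y - s| < ε → ‖g y - g t‖ < r'' := by
    have hmem : Metric.ball (g s) (r'' - m) ∈ nhds (g s) := Metric.ball_mem_nhds _ hδ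
    have hpre := Filter.mem_map.1 (hcont hmem)
    rw [Metric.mem_nhdsWithin_iff] at hpre
    obtain ⟨ε, hε, hsub⟩ := hpre
    refine ⟨ε, hε, fun y hyJ hyd => ?_⟩
    have hymem : y ∈ Metric.ball s ε ∩ J := by
      refine ⟨?_, hyJ⟩
      simpa [Real.dist_eq] using hyd
    have hgy : dist (g y) (g s) < r'' - m := hsub hymem
    have hgy' : ‖g y - g s‖ < r'' - m := by rwa [Complex.dist_eq] at hgy
    calc ‖g y - g t‖ = ‖(g y - g s) + (g s - g t)‖ := by ring_nf
      _ ≤ ‖g y - g s‖ + ‖g s - g t‖ := norm_add_le _ _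
      _ < (r'' - m) + m := by exact add_lt_add_of_lt_of_le hgy' le_rfl
      _ = r'' := by ring
  -- the good compact subinterval K
  set A := max a (s - ε / 2) with hAdef
  set B := min b (s + ε / 2) with hBdef
  set K : Set ℝ := Set.Icc A B with hKdef
  have hsab : s ∈ Set.Icc a b := by rw [← hJ]; exact hsJ
  have hAB : A < B := by
    apply max_lt <;> apply lt_min <;> first
      | exact hab
      | linarith [hsab.1, hsab.2, hε]
  have hKJ : K ⊆ J := by
    rw [hJ, hKdef]
    exact Set.Icc_subset_Icc (le_max_left _ _) (min_le_left _ _)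
  have hsK : s ∈ K := by
    rw [hKdef]
    constructor
    · exact max_le hsab.1 (by linarith)
    · exact le_min hsab.2 (by linarith)
  have hUK : UniqueDiffOn ℝ K := by rw [hKdef]; exact uniqueDiffOn_Icc hAB
  have hKconv : Convex ℝ K := by rw [hKdef]; exact convex_Icc _ _
  have hKbound : ∀ x ∈ K, ‖g x - g t‖ ≤ r'' := by
    intro x hxK
    have hxJ := hKJ hxK
    rw [hKdef] at hxK
    have h1 : s - ε / 2 ≤ x := le_trans (le_max_right _ _) hxK.1
    have h2 : x ≤ s + ε / 2 := le_trans hxK.2 (min_le_right _ _)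
    have hx2 : |x - s| < ε := by rw [abs_sub_lt_iff]; constructor <;> linarith
    exact (hKball x hxJ hx2).le
  -- J and K agree near s
  have hset : J =ᶠ[nhds s] K := by
    rw [Filter.eventuallyEq_set]
    filter_upwards [Metric.ball_mem_nhds s (by positivity : (0:ℝ) < ε / 2)] with y hy
    have hyd : |y - s| < ε / 2 := by simpa [Real.dist_eq] using hy
    rw [abs_sub_lt_iff] at hyd
    rw [hJ, hKdef]
    constructor
    · intro hyJ
      exact ⟨max_le hyJ.1 (by linarith), le_min hyJ.2 (by linarith)⟩
    · intro hyK
      exact ⟨le_trans (le_max_left _ _) hyK.1, le_trans hyK.2 (min_le_left _ _)⟩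
  -- iterated derivatives within K agree with those within J
  have htay : HasFTaylorSeriesUpToOn (⊤ : ℕ∞) g (ftaylorSeriesWithin ℝ g J) J :=
    hg'.ftaylorSeriesWithin hUJ
  have heqJK : ∀ q : ℕ, ∀ x ∈ K,
      iteratedFDerivWithin ℝ q g K x = iteratedFDerivWithin ℝ q g J x := by
    intro q x hx
    exact ((htay.mono hKJ).eq_iteratedFDerivWithin_of_uniqueDiffOn
      (by exact_mod_cast le_top) hUK hx).symm
  have hgK : ContDiffOn ℝ (⊤ : ℕ∞) g K := hg'.mono hKJ
  have hhK : ContDiffOn ℝ (⊤ : ℕ∞) (fun y => g y - g t) K := hgK.sub contDiffOn_const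
  have hDh : ∀ q, 1 ≤ q → ∀ x ∈ K,
      ‖iteratedDerivWithin q (fun y => g y - g t) K x‖ ≤ N * (q ! * S ^ q) := by
    intro q hq x hx
    have hconstK : iteratedDerivWithin q (fun _ : ℝ => g t) K x = 0 := by
      rw [iteratedDerivWithin_eq_iteratedFDerivWithin,
        iteratedFDerivWithin_const_of_ne (show q ≠ 0 by omega) _ _]
      rfl
    have hsub : iteratedDerivWithin q (fun y => g y - g t) K x
        = iteratedDerivWithin q g K x - iteratedDerivWithin q (fun _ : ℝ => g t) K x := by
      rw [show (fun y => g y - g t) = g - (fun _ : ℝ => g t) from rfl]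
      exact iteratedDerivWithin_sub hx hUK ((hgK x hx).of_le (by exact_mod_cast (le_top : (q : ℕ∞) ≤ ⊤)))
        contDiffWithinAt_const
    rw [hsub, hconstK, sub_zero]
    have : ‖iteratedDerivWithin q g K x‖ = ‖iteratedDerivWithin q g J x‖ := by
      rw [← norm_iteratedFDerivWithin_eq_norm_iteratedDerivWithin, heqJK q x hx,
        norm_iteratedFDerivWithin_eq_norm_iteratedDerivWithin]
    rw [this]
    exact hNg q x (hKJ hx)
  have hA := norm_iteratedDerivWithin_pow_le hUK hhK hS hN0 hDh
  -- uniform bounds on K for the terms of the series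
  set r₁ := (r'' + r) / 2 with hr₁def
  have hr''r₁ : r'' < r₁ := by rw [hr₁def]; linarith
  have hr₁r : r₁ < r := by rw [hr₁def]; linarith
  have hr₁0 : 0 ≤ r₁ := by nlinarith
  have hr₁ρ : r₁ < ρ := by linarith
  set X₁ := 1 + N / (r₁ - r'') with hX₁def
  set u : ℕ → ℕ → ℝ := fun q n => (q ! * S ^ q * X₁ ^ q) * (‖c n‖ * r₁ ^ n) with hudef
  have husum : ∀ q, Summable (u q) := fun q => (hconv r₁ hr₁0 hr₁ρ).mul_left _
  have hsmul : ∀ (n q : ℕ), ∀ x ∈ K,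
      iteratedDerivWithin q (fun y => c n * (g y - g t) ^ n) K x
        = c n • iteratedDerivWithin q (fun y => (g y - g t) ^ n) K x := by
    intro n q x hx
    exact iteratedDerivWithin_const_smul hx hUK (c n)
      ((hhK.pow n x hx).of_le (by exact_mod_cast (le_top : (q : ℕ∞) ≤ ⊤)))
  have hubound : ∀ (n q : ℕ), ∀ x ∈ K,
      ‖iteratedDerivWithin q (fun y => c n * (g y - g t) ^ n) K x‖ ≤ u q n := by
    intro n q x hx
    rw [hsmul n q x hx, norm_smul]
    have h1 := hA n q x hx
    have h2 : Bmaj (‖g x - g t‖) N n q ≤ r₁ ^ n * X₁ ^ q :=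
      Bmaj_le (norm_nonneg _) (hKbound x hx) hr''r₁ hN0 n q
    calc ‖c n‖ * ‖iteratedDerivWithin q (fun y => (g y - g t) ^ n) K x‖
        ≤ ‖c n‖ * (q ! * S ^ q * (r₁ ^ n * X₁ ^ q)) := by
          refine mul_le_mul_of_nonneg_left (h1.trans ?_) (norm_nonneg _)
          exact mul_le_mul_of_nonneg_left h2 (by positivity)
      _ = u q n := by rw [hudef]; ring
  -- the series representation of the iterated derivative
  have hCD : ∀ n : ℕ, ContDiffOn ℝ (⊤ : ℕ∞) (fun y => c n * (g y - g t) ^ n) K :=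
    fun n => contDiffOn_const.mul (hhK.pow n)
  have hswap : iteratedDerivWithin p (fun x => ∑' n : ℕ, c n * (g x - g t) ^ n) J s
      = iteratedDerivWithin p (fun x => ∑' n : ℕ, c n * (g x - g t) ^ n) K s := by
    simp only [iteratedDerivWithin_eq_iteratedFDerivWithin]
    rw [iteratedFDerivWithin_congr_set hset]
  have hrepr : iteratedDerivWithin p (fun x => ∑' n : ℕ, c n * (g x - g t) ^ n) K s
      = ∑' n : ℕ, iteratedDerivWithin p (fun y => c n * (g y - g t) ^ n) K s :=
    iteratedDerivWithin_tsum_of_bound hKconv hUK p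
      (fun n y => c n * (g y - g t) ^ n) u hCD husum hubound s hsK
  -- the sharp estimate at the point s
  set X := 1 + N / (r - m) with hXdef
  have hX0 : 0 ≤ X := by
    have : 0 ≤ N / (r - m) := div_nonneg hN0 hrm.le
    rw [hXdef]; linarith
  have hterm : ∀ n : ℕ, ‖iteratedDerivWithin p (fun y => c n * (g y - g t) ^ n) K s‖
      ≤ (‖c n‖ * r ^ n) * (p ! * S ^ p * X ^ p) := by
    intro n
    rw [hsmul n p s hsK, norm_smul]
    have h1 := hA n p s hsK
    have h2 : Bmaj (‖g s - g t‖) N n p ≤ r ^ n * X ^ p :=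
      Bmaj_le hm0 le_rfl hmr hN0 n p
    calc ‖c n‖ * ‖iteratedDerivWithin p (fun y => (g y - g t) ^ n) K s‖
        ≤ ‖c n‖ * (p ! * S ^ p * (r ^ n * X ^ p)) := by
          refine mul_le_mul_of_nonneg_left (h1.trans ?_) (norm_nonneg _)
          exact mul_le_mul_of_nonneg_left h2 (by positivity)
      _ = (‖c n‖ * r ^ n) * (p ! * S ^ p * X ^ p) := by ring
  have hsumR : Summable fun n : ℕ => (‖c n‖ * r ^ n) * (p ! * S ^ p * X ^ p) :=
    (hconv r (hm0.trans hmr.le) hr2).mul_right _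
  have hsumL : Summable fun n : ℕ =>
      ‖iteratedDerivWithin p (fun y => c n * (g y - g t) ^ n) K s‖ :=
    Summable.of_nonneg_of_le (fun n => norm_nonneg _) hterm hsumR
  have hmain : ‖iteratedDerivWithin p (fun x => ∑' n : ℕ, c n * (g x - g t) ^ n) J s‖
      ≤ (∑' n : ℕ, ‖c n‖ * r ^ n) * (p ! * S ^ p * X ^ p) := by
    rw [hswap, hrepr]
    refine (norm_tsum_le_tsum_norm hsumL).trans ?_
    refine (Summable.tsum_le_tsum hterm hsumL hsumR).trans ?_
    rw [tsum_mul_right]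
  -- conversion to ℝ≥0∞
  have hψ0 : 0 ≤ ∑' n : ℕ, ‖c n‖ * r ^ n := tsum_nonneg fun n => mul_nonneg (norm_nonneg _) (pow_nonneg (hm0.trans hmr.le) n)
  calc (‖iteratedDerivWithin p (fun x => ∑' n : ℕ, c n * (g x - g t) ^ n) J s‖₊ : ℝ≥0∞)
      = ENNReal.ofReal ‖iteratedDerivWithin p
          (fun x => ∑' n : ℕ, c n * (g x - g t) ^ n) J s‖ :=
        (ofReal_norm _).symm
    _ ≤ ENNReal.ofReal ((∑' n : ℕ, ‖c n‖ * r ^ n) * (p ! * S ^ p * X ^ p)) :=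
        ENNReal.ofReal_le_ofReal hmain
    _ = ENNReal.ofReal (∑' n : ℕ, ‖c n‖ * r ^ n) * ENNReal.ofReal (p ! : ℝ) *
          ENNReal.ofReal (S ^ p) * ENNReal.ofReal (X ^ p) := by
        rw [ENNReal.ofReal_mul hψ0, ENNReal.ofReal_mul (mul_nonneg (Nat.cast_nonneg _) (pow_nonneg hS.le p)),
          ENNReal.ofReal_mul (Nat.cast_nonneg _)]
        ring
    _ = ENNReal.ofReal (∑' n : ℕ, ‖c n‖ * r ^ n) * (p ! : ℝ≥0∞) *
          (ENNReal.ofReal S) ^ p * (1 + anorm J S g / ENNReal.ofReal (r - m)) ^ p := by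
        rw [ENNReal.ofReal_natCast, ENNReal.ofReal_pow hS.le, ENNReal.ofReal_pow hX0,
          hXdef, ENNReal.ofReal_add zero_le_one (div_nonneg hN0 hrm.le),
          ENNReal.ofReal_one, ENNReal.ofReal_div_of_pos hrm, hNdef,
          ENNReal.ofReal_toReal hfin]
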